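/- arXiv:1609.00145 — 7 statements merged into one kernel-verified Lean document; each statement's English description precedes it below -/
import Mathlib

section
/- Let R be a commutative ring and A = R^n the product ring (n ≥ 1). Then the R-algebra map λ : A ⊗_R A → A^n defined on the (i,j)-th factor R_i ⊗ R_j by sending it identically onto the factor R_i of the (i−j mod n)-th copy of A is an isomorphism of A-algebras, where A acts on A ⊗_R A via the left factor and on A^n diagonally twisted by the cyclic shift automorphisms. -/
open TensorProduct

/-- For `A = R^n`, the `A`-algebra map
`λ : A ⊗_R A → A^n` whose `g`-component is `a ⊗ b ↦ a · γ^g(b)` (with `γ` the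
cyclic shift, i.e. the `(i,j)`-th factor `R_i ⊗ R_j` maps identically onto the
factor `R_i` of the `(i−j)`-th copy of `A`) is an isomorphism of `A`-algebras. -/
theorem stmt_3 (R : Type) [CommRing R] (n : ℕ) (hn : 0 < n)
    (lam : (Fin n → R) ⊗[R] (Fin n → R) →ₐ[R] (Fin n → (Fin n → R)))
    (hlam : lam = Pi.algHom R _ (fun g : Fin n =>
      Algebra.TensorProduct.productMap (AlgHom.id R (Fin n → R))
        (Pi.algHom R _ (fun i : Fin n => Pi.evalAlgHom R (fun _ => R) (i - g))))) :
    Function.Bijective lam ∧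
    -- `λ` is `A`-linear for the left-factor action on `A ⊗_R A` and the
    -- (shift-twisted) componentwise action on `A^n`:
    (∀ (a : Fin n → R) (t : (Fin n → R) ⊗[R] (Fin n → R)) (g : Fin n),
      lam ((Algebra.TensorProduct.includeLeft (R := R) (S := R) (A := Fin n → R) a) * t) g
        = a * lam t g) := by
  haveI : NeZero n := ⟨hn.ne'⟩
  constructor
  · -- bijectivity
    set B := (Pi.basisFun R (Fin n)).tensorProduct (Pi.basisFun R (Fin n)) with hB
    set B' := (Pi.basisFun R (Fin n × Fin n)).map (LinearEquiv.curry R R (Fin n) (Fin n)) with hB'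
    set σ : Fin n × Fin n ≃ Fin n × Fin n :=
      { toFun := fun p => (p.1 - p.2, p.1)
        invFun := fun p => (p.2, p.2 - p.1)
        left_inv := fun p => by simp [sub_sub_cancel]
        right_inv := fun p => by simp [sub_sub_cancel] } with hσ
    have key : lam.toLinearMap = (B.equiv B' σ).toLinearMap := by
      apply B.ext
      rintro ⟨i, j⟩
      simp only [AlgHom.toLinearMap_apply, LinearEquiv.coe_coe, Module.Basis.equiv_apply]
      simp only [Module.Basis.tensorProduct_apply, Pi.basisFun_apply, hB, hB', hσ,
        LinearMap.coe_coe, Module.Basis.map_apply]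
      rw [hlam]
      funext g k
      simp only [Pi.algHom_apply, Algebra.TensorProduct.productMap_apply_tmul, AlgHom.coe_id,
        id_eq, Pi.evalAlgHom_apply, Pi.mul_apply, LinearEquiv.coe_curry,
        Function.curry, Pi.basisFun_apply]
      simp only [Equiv.coe_fn_mk, Pi.single_apply, Prod.mk.injEq]
      by_cases h1 : k = i
      · subst h1
        by_cases h2 : g = k - j
        · subst h2
          simp [sub_sub_cancel]
        · have h3 : k - g ≠ j := fun h => h2 (by rw [← h, sub_sub_cancel])
          simp [h2, h3]
      · simp [h1]
    have : Function.Bijective lam.toLinearMap := by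
      rw [key]; exact (B.equiv B' σ).bijective
    exact this
  · intro a t g
    subst hlam
    simp only [map_mul, Pi.mul_apply]
    congr 1
    simp [Algebra.TensorProduct.includeLeft_apply,
      Algebra.TensorProduct.productMap_apply_tmul]
end

section
/- Let k be a field and A a nonzero commutative k-algebra, and let Γ be a finite group of k-algebra automorphisms of A such that the map λ_Γ : A ⊗_k A → ∏_{γ∈Γ} A, defined by pr_γ(λ_Γ(a ⊗ b)) = a·γ(b), is an isomorphism. Then A is separable over k: there exists an A-bimodule-linear section σ : A → A ⊗_k A of the multiplication with (μ ∘ (1 ⊗ γ) ∘ σ)(a) = a if γ = 1 and = 0 otherwise. -/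
open TensorProduct
open scoped Classical

/-- If `A` is a nonzero commutative `k`-algebra and `Γ` a finite group
of `k`-algebra automorphisms such that `λ_Γ : A ⊗_k A → ∏_{γ∈Γ} A` (with
`γ`-component `a ⊗ b ↦ a·γ(b)`) is an isomorphism, then `A` is separable: there is
an `A`-bimodule-linear section `σ` of the multiplication with
`μ ∘ (1 ⊗ γ) ∘ σ = δ_{γ,1}·id` for all `γ ∈ Γ`. -/
theorem stmt_4 (k A : Type) [Field k] [CommRing A] [Algebra k A] [Nontrivial A]
    (Γ : Subgroup (A ≃ₐ[k] A)) [Finite Γ]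
    (lam : A ⊗[k] A →ₐ[k] (Γ → A))
    (hlam : lam = Pi.algHom k _ (fun γ : Γ =>
      Algebra.TensorProduct.productMap (AlgHom.id k A) (γ : A ≃ₐ[k] A).toAlgHom))
    (hbij : Function.Bijective lam) :
    ∃ σ : A →ₗ[k] A ⊗[k] A,
      (∀ a : A, LinearMap.mul' k A (σ a) = a) ∧
      (∀ a x : A, σ (a * x) = (a ⊗ₜ[k] (1 : A)) * σ x) ∧
      (∀ x a : A, σ (x * a) = σ x * ((1 : A) ⊗ₜ[k] a)) ∧
      (∀ (γ : Γ) (a : A),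
        Algebra.TensorProduct.productMap (AlgHom.id k A) (γ : A ≃ₐ[k] A).toAlgHom (σ a)
          = if γ = 1 then a else 0) := by
  obtain ⟨e, he⟩ : ∃ e : A ⊗[k] A ≃ₗ[k] (Γ → A), ∀ z, e z = lam z :=
    ⟨LinearEquiv.ofBijective lam.toLinearMap hbij, fun _ => rfl⟩
  refine ⟨e.symm.toLinearMap ∘ₗ LinearMap.single k (fun _ : Γ => A) 1, ?_, ?_, ?_, ?_⟩
  all_goals
    have key : ∀ a : A, lam (e.symm (Pi.single 1 a)) = Pi.single 1 a := by
      intro a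
      rw [← he]
      exact e.apply_symm_apply (Pi.single 1 a)
  · intro a
    have h1 : ∀ z : A ⊗[k] A, LinearMap.mul' k A z = lam z 1 := by
      intro z
      induction z using TensorProduct.induction_on with
      | zero => simp
      | tmul x y => simp [hlam]
      | add x y hx hy => simp [map_add, hx, hy]
    simp only [LinearMap.comp_apply, LinearEquiv.coe_coe, LinearMap.single_apply]
    rw [h1, key, Pi.single_eq_same]
  · intro a x
    apply hbij.1
    simp only [LinearMap.comp_apply, LinearEquiv.coe_coe, LinearMap.single_apply]
    rw [key, map_mul, key]
    funext γ
    have : lam (a ⊗ₜ[k] (1 : A)) γ = a := by simp [hlam]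
    simp only [Pi.mul_apply, this, Pi.single_apply]
    split <;> simp [mul_comm]
  · intro x a
    apply hbij.1
    simp only [LinearMap.comp_apply, LinearEquiv.coe_coe, LinearMap.single_apply]
    rw [key, map_mul, key]
    funext γ
    have : lam ((1 : A) ⊗ₜ[k] a) γ = (γ : A ≃ₐ[k] A) a := by simp [hlam]
    simp only [Pi.mul_apply, this, Pi.single_apply]
    split_ifs with h
    · subst h; simp
    · simp
  · intro γ a
    have : Algebra.TensorProduct.productMap (AlgHom.id k A) (γ : A ≃ₐ[k] A).toAlgHom
        (e.symm (Pi.single 1 a)) = lam (e.symm (Pi.single 1 a)) γ := by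
      rw [hlam]; rfl
    simp only [LinearMap.comp_apply, LinearEquiv.coe_coe, LinearMap.single_apply]
    rw [this, key, Pi.single_apply]
end

section
/- Let k be a field, A a nonzero commutative k-algebra, and Γ a finite group of k-algebra automorphisms of A such that λ_Γ : A ⊗_k A → ∏_{γ∈Γ} A (with components a ⊗ b ↦ a·γ(b)) is an isomorphism. If B is a nonzero commutative k-algebra, α : A → B is a k-algebra homomorphism, and γ ∈ Γ satisfies α ∘ γ = α, then γ = id. -/
open TensorProduct

/-
Choose `t ∈ A ⊗ A` with `λ_Γ t = δ_γ`, the indicator of `γ`. Since `α ∘ γ = α`, the `γ`- and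
`1`-components of `λ_Γ` agree after composing with `α`, so `α (δ_γ γ) = α (δ_γ 1)`. If `γ ≠ 1`
this reads `1 = 0` in `B`, which is nonzero.
-/

theorem eq_of_surjective_of_comp_eval_eq {C ι A B : Type*} [DecidableEq ι] [Semiring A]
    [Semiring B] [Nontrivial B] {φ : C → ι → A} (hφ : Function.Surjective φ) (α : A →+* B)
    {i j : ι} (h : ∀ c, α (φ c i) = α (φ c j)) : i = j := by
  by_contra hne
  obtain ⟨c, hc⟩ := hφ (Pi.single i 1)
  have := h c
  rw [hc, Pi.single_eq_same, Pi.single_eq_of_ne (Ne.symm hne), map_one, map_zero] at this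
  exact one_ne_zero this

theorem Algebra.TensorProduct.comp_productMap_eq_of_comp_eq {R A B : Type*} [CommSemiring R]
    [CommSemiring A] [Algebra R A] [CommSemiring B] [Algebra R B] (α : A →ₐ[R] B)
    (f g g' : A →ₐ[R] A) (h : α.comp g = α.comp g') :
    α.comp (productMap f g) = α.comp (productMap f g') :=
  Algebra.TensorProduct.ext' fun a b => by
    simpa using congrArg (α (f a) * ·) (AlgHom.congr_fun h b)

theorem stmt_5_general (k A B : Type) [Field k] [CommRing A] [Algebra k A]
    [CommRing B] [Algebra k B] [Nontrivial B]
    (Γ : Subgroup (A ≃ₐ[k] A))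
    (lam : A ⊗[k] A →ₐ[k] (Γ → A))
    (hlam : lam = Pi.algHom k _ (fun γ : Γ =>
      Algebra.TensorProduct.productMap (AlgHom.id k A) (γ : A ≃ₐ[k] A).toAlgHom))
    (hbij : Function.Bijective lam)
    (α : A →ₐ[k] B) (γ : Γ)
    (hγ : ∀ a : A, α ((γ : A ≃ₐ[k] A) a) = α a) :
    γ = 1 := by
  classical
  have hαγ : α.comp (γ : A ≃ₐ[k] A).toAlgHom = α.comp ((1 : Γ) : A ≃ₐ[k] A).toAlgHom :=
    AlgHom.ext fun a => by simpa using hγ a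
  have hcomp :=
    Algebra.TensorProduct.comp_productMap_eq_of_comp_eq α (AlgHom.id k A) _ _ hαγ
  refine eq_of_surjective_of_comp_eval_eq hbij.2 α.toRingHom fun t => ?_
  subst hlam
  simpa using AlgHom.congr_fun hcomp t

/-- If `A` is quasi-Galois over the field `k` with finite group `Γ`
(i.e. `λ_Γ` is an isomorphism), `B` is a nonzero commutative `k`-algebra,
`α : A → B` a `k`-algebra homomorphism and `γ ∈ Γ` satisfies `α ∘ γ = α`,
then `γ = id`. -/
theorem stmt_5 (k A B : Type) [Field k] [CommRing A] [Algebra k A] [Nontrivial A]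
    [CommRing B] [Algebra k B] [Nontrivial B]
    (Γ : Subgroup (A ≃ₐ[k] A)) [Finite Γ]
    (lam : A ⊗[k] A →ₐ[k] (Γ → A))
    (hlam : lam = Pi.algHom k _ (fun γ : Γ =>
      Algebra.TensorProduct.productMap (AlgHom.id k A) (γ : A ≃ₐ[k] A).toAlgHom))
    (hbij : Function.Bijective lam)
    (α : A →ₐ[k] B) (γ : Γ)
    (hγ : ∀ a : A, α ((γ : A ≃ₐ[k] A) a) = α a) :
    γ = 1 :=
  stmt_5_general k A B Γ lam hlam hbij α γ hγ
end

section
/- Let k be a field, A a nonzero commutative k-algebra quasi-Galois over k with finite group Γ (i.e., λ_Γ : A ⊗_k A → ∏_{γ∈Γ} A, a ⊗ b ↦ (a·γ(b))_γ, is an isomorphism), and let B be a nonzero commutative k-algebra with no nontrivial idempotents admitting at least one k-algebra homomorphism A → B. Then Γ acts freely and transitively on the set of k-algebra homomorphisms A → B; in particular there are exactly |Γ| such homomorphisms. -/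
open TensorProduct

/-- If `A` is quasi-Galois over the field `k` with finite group `Γ`, and
`B` is a nonzero commutative `k`-algebra with no nontrivial idempotents admitting at
least one `k`-algebra homomorphism `A → B`, then `Γ` acts freely and transitively (by
precomposition) on the set of `k`-algebra homomorphisms `A → B`; in particular there are
exactly `|Γ|` such homomorphisms. -/
theorem stmt_6 (k A B : Type) [Field k] [CommRing A] [Algebra k A] [Nontrivial A]
    [CommRing B] [Algebra k B] [Nontrivial B]
    (Γ : Subgroup (A ≃ₐ[k] A)) [Finite Γ]
    (lam : A ⊗[k] A →ₐ[k] (Γ → A))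
    (hlam : lam = Pi.algHom k _ (fun γ : Γ =>
      Algebra.TensorProduct.productMap (AlgHom.id k A) (γ : A ≃ₐ[k] A).toAlgHom))
    (hbij : Function.Bijective lam)
    (hB : ∀ e : B, e * e = e → e = 0 ∨ e = 1)
    (hne : Nonempty (A →ₐ[k] B)) :
    (∀ (f : A →ₐ[k] B) (γ : Γ), f.comp (γ : A ≃ₐ[k] A).toAlgHom = f → γ = 1) ∧
    (∀ f g : A →ₐ[k] B, ∃ γ : Γ, g = f.comp (γ : A ≃ₐ[k] A).toAlgHom) ∧
    Nat.card (A →ₐ[k] B) = Nat.card Γ := by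
  classical
  cases nonempty_fintype Γ
  -- lam on pure tensors
  have hlam_tmul : ∀ (a b : A) (δ : Γ), lam (a ⊗ₜ[k] b) δ = a * (δ : A ≃ₐ[k] A) b := by
    intro a b δ
    subst hlam
    simp
  set lamE : A ⊗[k] A ≃ₐ[k] (Γ → A) := AlgEquiv.ofBijective lam hbij with hlamE
  have hlamE_apply : ∀ x, lamE x = lam x := fun _ => rfl
  have hlam_symm : ∀ z : Γ → A, lam (lamE.symm z) = z := by
    intro z
    rw [← hlamE_apply, AlgEquiv.apply_symm_apply]
  -- the indicator idempotents
  set e : Γ → (Γ → A) := fun δ => Pi.single δ 1 with he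
  have hsum : (∑ δ : Γ, e δ) = 1 := by
    have := Finset.univ_sum_single (1 : Γ → A)
    simpa [he] using this
  have hidem : ∀ δ, e δ * e δ = e δ := by
    intro δ
    funext ε
    by_cases h : ε = δ <;> simp [he, Pi.single_apply, h]
  have hmulne : ∀ δ ε : Γ, δ ≠ ε → e δ * e ε = 0 := by
    intro δ ε hδε
    funext ζ
    by_cases h : ζ = δ <;> simp [he, Pi.single_apply, h, Ne.symm hδε]
  -- the homs ψ f g : (Γ → A) →ₐ[k] B
    -- ψ f g = (productMap f g) ∘ lamE.symm
  set ψ : (A →ₐ[k] B) → (A →ₐ[k] B) → ((Γ → A) →ₐ[k] B) :=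
    fun f g => (Algebra.TensorProduct.productMap f g).comp lamE.symm.toAlgHom with hψ
  have hψ_lam : ∀ (f g : A →ₐ[k] B) (x : A ⊗[k] A),
      ψ f g (lam x) = Algebra.TensorProduct.productMap f g x := by
    intro f g x
    simp only [hψ, AlgHom.comp_apply, AlgEquiv.coe_algHom]
    rw [← hlamE_apply, AlgEquiv.symm_apply_apply]
  -- existence and uniqueness of the component where ψ is 1
  have hexu : ∀ f g : A →ₐ[k] B, ∃ δ : Γ, ψ f g (e δ) = 1 ∧
      ∀ ε : Γ, ψ f g (e ε) = 1 → ε = δ := by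
    intro f g
    have hid : ∀ δ : Γ, ψ f g (e δ) = 0 ∨ ψ f g (e δ) = 1 := by
      intro δ
      apply hB
      rw [← map_mul, hidem]
    have hsum1 : (∑ δ : Γ, ψ f g (e δ)) = 1 := by
      rw [← map_sum, hsum, map_one]
    have hex : ∃ δ : Γ, ψ f g (e δ) = 1 := by
      by_contra hc
      push_neg at hc
      have : ∀ δ : Γ, ψ f g (e δ) = 0 := by
        intro δ
        rcases hid δ with h | h
        · exact h
        · exact absurd h (hc δ)
      rw [Finset.sum_congr rfl (fun δ _ => this δ), Finset.sum_const_zero] at hsum1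
      exact zero_ne_one (α := B) hsum1
    obtain ⟨δ, hδ⟩ := hex
    refine ⟨δ, hδ, fun ε hε => ?_⟩
    by_contra hεδ
    have : (1 : B) = 0 := by
      calc (1 : B) = ψ f g (e ε) * ψ f g (e δ) := by rw [hε, hδ, one_mul]
        _ = ψ f g (e ε * e δ) := (map_mul _ _ _).symm
        _ = 0 := by rw [hmulne ε δ hεδ, map_zero]
    exact one_ne_zero (α := B) this
  -- if ψ f g (e δ) = 1 then g = f ∘ δ
  have hone : ∀ (f g : A →ₐ[k] B) (δ : Γ), ψ f g (e δ) = 1 →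
      g = f.comp (δ : A ≃ₐ[k] A).toAlgHom := by
    intro f g δ hδ
    have hfactor : ∀ x : Γ → A, ψ f g x = ψ f g (Pi.single δ (x δ)) := by
      intro x
      have hx : x * e δ = Pi.single δ (x δ) := by
        funext ε
        by_cases h : ε = δ <;> simp [he, Pi.single_apply, h]
      calc ψ f g x = ψ f g x * ψ f g (e δ) := by rw [hδ, mul_one]
        _ = ψ f g (x * e δ) := (map_mul _ _ _).symm
        _ = ψ f g (Pi.single δ (x δ)) := by rw [hx]
    ext b
    have h1 : g b = ψ f g (lam ((1 : A) ⊗ₜ[k] b)) := by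
      rw [hψ_lam]; simp
    have h2 : f ((δ : A ≃ₐ[k] A) b) = ψ f g (lam ((((δ : A ≃ₐ[k] A)) b) ⊗ₜ[k] (1 : A))) := by
      rw [hψ_lam]; simp
    show g b = f ((δ : A ≃ₐ[k] A) b)
    rw [h1, h2, hfactor (lam ((1 : A) ⊗ₜ[k] b)),
      hfactor (lam ((((δ : A ≃ₐ[k] A)) b) ⊗ₜ[k] (1 : A))), hlam_tmul, hlam_tmul]
    simp
  -- translation lemma
  have hshift : ∀ (f g : A →ₐ[k] B) (γ δ : Γ),
      ψ f (g.comp (γ : A ≃ₐ[k] A).toAlgHom) (e δ) = ψ f g (e (δ * γ⁻¹)) := by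
    intro f g γ δ
    set m : A ⊗[k] A →ₐ[k] A ⊗[k] A :=
      Algebra.TensorProduct.map (AlgHom.id k A) (γ : A ≃ₐ[k] A).toAlgHom with hm
    have hcomp : Algebra.TensorProduct.productMap f (g.comp (γ : A ≃ₐ[k] A).toAlgHom)
        = (Algebra.TensorProduct.productMap f g).comp m := by
      apply Algebra.TensorProduct.ext'
      intro a b
      simp [hm]
    have hkey : m (lamE.symm (e δ)) = lamE.symm (e (δ * γ⁻¹)) := by
      apply hbij.injective
      rw [hlam_symm]
      have : ∀ y : A ⊗[k] A, lam (m y) = fun ε : Γ => lam y (ε * γ) := by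
        intro y
        induction y using TensorProduct.induction_on with
        | zero => funext ε; simp
        | tmul a b =>
            funext ε
            simp [hm, hlam_tmul, Subgroup.coe_mul, AlgEquiv.mul_apply]
        | add x y hx hy =>
            funext ε
            simp only [map_add, Pi.add_apply] at hx hy ⊢
            rw [congrFun hx ε, congrFun hy ε]
      rw [this, hlam_symm]
      funext ε
      by_cases h : ε = δ * γ⁻¹
      · subst h
        simp [he, Pi.single_apply, inv_mul_cancel_right]
      · have h2 : ε * γ ≠ δ := by
          intro hc
          apply h
          rw [← hc, mul_assoc, mul_inv_cancel, mul_one]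
        simp [he, Pi.single_apply, h, h2]
    calc ψ f (g.comp (γ : A ≃ₐ[k] A).toAlgHom) (e δ)
        = Algebra.TensorProduct.productMap f (g.comp (γ : A ≃ₐ[k] A).toAlgHom)
            (lamE.symm (e δ)) := rfl
      _ = Algebra.TensorProduct.productMap f g (m (lamE.symm (e δ))) := by
          rw [hcomp]; rfl
      _ = Algebra.TensorProduct.productMap f g (lamE.symm (e (δ * γ⁻¹))) := by rw [hkey]
      _ = ψ f g (e (δ * γ⁻¹)) := rfl
  -- freeness
  have hfree : ∀ (f : A →ₐ[k] B) (γ : Γ), f.comp (γ : A ≃ₐ[k] A).toAlgHom = f → γ = 1 := by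
    intro f γ hγ
    obtain ⟨δ₀, hδ₀, huniq⟩ := hexu f f
    have h1 : ψ f (f.comp (γ : A ≃ₐ[k] A).toAlgHom) (e (δ₀ * γ)) = 1 := by
      rw [hshift]
      rw [mul_assoc, mul_inv_cancel, mul_one]
      exact hδ₀
    rw [hγ] at h1
    have := huniq (δ₀ * γ) h1
    have hγ1 : δ₀ * γ = δ₀ * 1 := by rw [mul_one]; exact this
    exact mul_left_cancel hγ1
  -- transitivity
  have htrans : ∀ f g : A →ₐ[k] B, ∃ γ : Γ, g = f.comp (γ : A ≃ₐ[k] A).toAlgHom := by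
    intro f g
    obtain ⟨δ₀, hδ₀, -⟩ := hexu f g
    exact ⟨δ₀, hone f g δ₀ hδ₀⟩
  refine ⟨hfree, htrans, ?_⟩
  -- cardinality
  obtain ⟨f₀⟩ := hne
  have hcompcomp : ∀ (f : A →ₐ[k] B) (γ δ : Γ),
      (f.comp (γ : A ≃ₐ[k] A).toAlgHom).comp (δ : A ≃ₐ[k] A).toAlgHom
        = f.comp ((γ * δ : Γ) : A ≃ₐ[k] A).toAlgHom := by
    intro f γ δ
    ext a
    simp [Subgroup.coe_mul, AlgEquiv.mul_apply]
  have hFbij : Function.Bijective (fun γ : Γ => f₀.comp (γ : A ≃ₐ[k] A).toAlgHom) := by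
    constructor
    · intro γ δ h
      simp only at h
      have h2 : f₀.comp ((γ * δ⁻¹ : Γ) : A ≃ₐ[k] A).toAlgHom = f₀ := by
        rw [← hcompcomp, h, hcompcomp, mul_inv_cancel]
        ext a
        simp
      have := hfree f₀ (γ * δ⁻¹) h2
      have : γ = δ := by
        have h3 : γ * δ⁻¹ * δ = 1 * δ := by rw [this]
        rwa [inv_mul_cancel_right, one_mul] at h3
      exact this
    · intro g
      obtain ⟨γ, hγ⟩ := htrans f₀ g
      exact ⟨γ, hγ.symm⟩
  exact (Nat.card_eq_of_bijective _ hFbij).symm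
end

section
/- Let H, K ≤ G be finite groups, k a commutative ring, and let T ⊂ G be a complete set of representatives for the double cosets H\G/K. Then the map G/K × G/H → ∐_{g∈T} G/(K ∩ H^g) that is inverse to [x] ↦ ([x]_K, [xg^{-1}]_H) on the g-component is a well-defined bijection of G-sets, where H^g = g^{-1}Hg and G acts diagonally on the product. -/
/-- Mackey decomposition for G-sets: if `T` is a complete set of
representatives of the double cosets `H\G/K`, then the map
`∐_{g∈T} G/(K ∩ H^g) → G/K × G/H`, `[x] ↦ ([x]_K, [xg⁻¹]_H)` on the `g`-component,
is a well-defined `G`-equivariant bijection. -/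
theorem stmt_8 (G : Type) [Group G] [Finite G] (H K : Subgroup G) (T : Finset G)
    (hT : ∀ x : G, ∃! t : G, t ∈ T ∧ ∃ h ∈ H, ∃ c ∈ K, x = h * t * c) :
    ∃ Φ : (Σ g : {t : G // t ∈ T},
        G ⧸ (K ⊓ Subgroup.map (MulAut.conj (g.val)⁻¹).toMonoidHom H)) →
        (G ⧸ K) × (G ⧸ H),
      (∀ (g : {t : G // t ∈ T}) (x : G),
        Φ ⟨g, QuotientGroup.mk x⟩ =
          (QuotientGroup.mk x, QuotientGroup.mk (x * (g.val)⁻¹))) ∧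
      Function.Bijective Φ ∧
      (∀ (g : {t : G // t ∈ T})
          (q : G ⧸ (K ⊓ Subgroup.map (MulAut.conj (g.val)⁻¹).toMonoidHom H)) (a : G),
        Φ ⟨g, a • q⟩ = a • Φ ⟨g, q⟩) := by
  have wd : ∀ (g : {t : G // t ∈ T}) (x y : G),
      x⁻¹ * y ∈ (K ⊓ Subgroup.map (MulAut.conj (g.val)⁻¹).toMonoidHom H) →
      ((QuotientGroup.mk x : G ⧸ K), (QuotientGroup.mk (x * (g.val)⁻¹) : G ⧸ H)) =
      ((QuotientGroup.mk y : G ⧸ K), (QuotientGroup.mk (y * (g.val)⁻¹) : G ⧸ H)) := by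
    rintro g x y hxy
    rw [Subgroup.mem_inf] at hxy
    obtain ⟨hK, hH⟩ := hxy
    rw [Subgroup.mem_map] at hH
    obtain ⟨h, hh, hh2⟩ := hH
    simp only [MulEquiv.coe_toMonoidHom, MulAut.conj_apply, inv_inv] at hh2
    refine Prod.ext (QuotientGroup.eq.mpr hK) ?_
    apply QuotientGroup.eq.mpr
    have e : (x * (g.val)⁻¹)⁻¹ * (y * (g.val)⁻¹) = g.val * (x⁻¹ * y) * (g.val)⁻¹ := by
      group
    rw [e, ← hh2]
    have e2 : g.val * ((g.val)⁻¹ * h * g.val) * (g.val)⁻¹ = h := by group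
    rw [e2]; exact hh
  refine ⟨fun p => Quotient.liftOn' p.2
      (fun x => ((QuotientGroup.mk x : G ⧸ K), (QuotientGroup.mk (x * (p.1.val)⁻¹) : G ⧸ H)))
      (fun x y hxy => wd p.1 x y (QuotientGroup.leftRel_apply.mp hxy)),
    fun g x => rfl, ⟨?_, ?_⟩, ?_⟩
  · -- injectivity
    rintro ⟨g, q⟩ ⟨g', q'⟩ heq
    induction q using Quotient.inductionOn' with | h x => ?_
    induction q' using Quotient.inductionOn' with | h y => ?_
    simp only [Quotient.liftOn'_mk'', Prod.mk.injEq] at heq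
    obtain ⟨hK, hH⟩ := heq
    rw [QuotientGroup.eq] at hK hH
    have key : (1:G) * g.val * (x⁻¹ * y) =
        ((x * (g.val)⁻¹)⁻¹ * (y * (g'.val)⁻¹)) * g'.val * 1 := by group
    have hgg' : g.val = g'.val := by
      obtain ⟨t, _, huniq⟩ := hT ((1:G) * g.val * (x⁻¹ * y))
      have h1 : g.val = t := huniq g.val ⟨g.prop, 1, one_mem _, x⁻¹ * y, hK, rfl⟩
      have h2 : g'.val = t := huniq g'.val ⟨g'.prop, _, hH, 1, one_mem _, key⟩
      rw [h1, h2]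
    have hg : g = g' := Subtype.ext hgg'
    subst hg
    refine Sigma.ext rfl ?_
    simp only [heq_eq_eq]
    apply Quotient.sound'
    rw [QuotientGroup.leftRel_apply]
    rw [Subgroup.mem_inf]
    refine ⟨hK, Subgroup.mem_map.mpr ⟨g.val * (x⁻¹ * y) * (g.val)⁻¹, ?_, ?_⟩⟩
    · have e : g.val * (x⁻¹ * y) * (g.val)⁻¹ = (x * (g.val)⁻¹)⁻¹ * (y * (g.val)⁻¹) := by
        group
      rw [e]; exact hH
    · simp only [MulEquiv.coe_toMonoidHom, MulAut.conj_apply, inv_inv]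
      group
  · -- surjectivity
    rintro ⟨qa, qb⟩
    induction qa using Quotient.inductionOn' with | h a => ?_
    induction qb using Quotient.inductionOn' with | h b => ?_
    obtain ⟨t, ⟨htT, h, hh, c, hc, hdec⟩, _⟩ := hT (b⁻¹ * a)
    refine ⟨⟨⟨t, htT⟩, QuotientGroup.mk (a * c⁻¹)⟩, ?_⟩
    simp only [Quotient.liftOn'_mk'']
    refine Prod.ext (QuotientGroup.eq.mpr (by simpa using inv_mem hc)) ?_
    apply QuotientGroup.eq.mpr
    have ha : a = b * (h * t * c) := by rw [← hdec]; group
    have e : (a * c⁻¹ * t⁻¹)⁻¹ * b = h⁻¹ := by rw [ha]; group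
    rw [e]; exact inv_mem hh
  · -- equivariance
    intro g q a
    induction q using Quotient.inductionOn' with | h x => ?_
    have h1 : (a • (QuotientGroup.mk x : G ⧸ (K ⊓ Subgroup.map (MulAut.conj (g.val)⁻¹).toMonoidHom H))) = QuotientGroup.mk (a * x) := rfl
    rw [h1]
    simp only [Quotient.liftOn'_mk'']
    refine Prod.ext rfl ?_
    show (QuotientGroup.mk (a * x * (g.val)⁻¹) : G ⧸ H) = a • QuotientGroup.mk (x * (g.val)⁻¹)
    rw [mul_assoc]
    rfl
end

section
/- Let R be a commutative ring and A a commutative R-algebra. Suppose there exist R-algebra homomorphisms f : A → B and g : B → A with g ∘ f = id_A, where B is a commutative separable R-algebra. Then, viewing A as a B-module via g, A is a direct summand of B as a B-module: there is a B-linear map f̃ : A → B with g ∘ f̃ = id_A. -/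
open TensorProduct

/-- If `f : A → B` and `g : B → A` are `R`-algebra homomorphisms with
`g ∘ f = id` and `B` is a commutative separable `R`-algebra, then (viewing `A` as a
`B`-module via `g`) `A` is a direct summand of `B` as a `B`-module: there is a
`B`-linear map `f̃ : A → B` with `g ∘ f̃ = id`. -/
theorem stmt_14 (R A B : Type) [CommRing R] [CommRing A] [Algebra R A]
    [CommRing B] [Algebra R B]
    (σ : B →ₗ[R] B ⊗[R] B)
    (hσ_sec : ∀ b : B, LinearMap.mul' R B (σ b) = b)
    (hσ_left : ∀ b x : B, σ (b * x) = (b ⊗ₜ[R] (1 : B)) * σ x)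
    (hσ_right : ∀ x b : B, σ (x * b) = σ x * ((1 : B) ⊗ₜ[R] b))
    (f : A →ₐ[R] B) (g : B →ₐ[R] A) (hgf : g.comp f = AlgHom.id R A) :
    ∃ ft : A →ₗ[R] B,
      (∀ (b : B) (a : A), ft (g b * a) = b * ft a) ∧
      (∀ a : A, g (ft a) = a) := by
  have hgf' : ∀ a : A, g (f a) = a := fun a => congrArg (fun h => h a) (congrArg DFunLike.coe hgf)
  -- the linear map on the second factor
  set φ : A → (B →ₗ[R] B) := fun a =>
    f.toLinearMap ∘ₗ ((LinearMap.mul R A).flip a) ∘ₗ g.toLinearMap with hφ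
  have hφ_apply : ∀ (a : A) (y : B), φ a y = f (g y * a) := fun a y => rfl
  have hφ_add : ∀ a a' : A, φ (a + a') = φ a + φ a' := by
    intro a a'
    apply LinearMap.ext; intro y
    simp [hφ_apply, mul_add]
  have hφ_smul : ∀ (r : R) (a : A), φ (r • a) = r • φ a := by
    intro r a
    apply LinearMap.ext; intro y
    simp [hφ_apply]
  set ftf : A → B := fun a =>
    LinearMap.mul' R B (LinearMap.lTensor B (φ a) (σ 1)) with hftf
  set ft : A →ₗ[R] B :=
    { toFun := ftf
      map_add' := by
        intro a a'
        simp [hftf, hφ_add, LinearMap.lTensor_add]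
      map_smul' := by
        intro r a
        simp [hftf, hφ_smul, LinearMap.lTensor_smul] } with hft
  have key1 : ∀ (a : A) (t : B ⊗[R] B),
      g (LinearMap.mul' R B (LinearMap.lTensor B (φ a) t))
        = g (LinearMap.mul' R B t) * a := by
    intro a t
    induction t using TensorProduct.induction_on with
    | zero => simp
    | tmul x y => simp [hφ_apply, hgf', mul_assoc]
    | add s t hs ht => simp [hs, ht, add_mul]
  have key2 : ∀ (a : A) (b : B) (t : B ⊗[R] B),
      LinearMap.mul' R B (LinearMap.lTensor B (φ (g b * a)) t)
        = LinearMap.mul' R B (LinearMap.lTensor B (φ a) (t * ((1 : B) ⊗ₜ[R] b))) := by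
    intro a b t
    induction t using TensorProduct.induction_on with
    | zero => simp
    | tmul x y =>
        simp only [Algebra.TensorProduct.tmul_mul_tmul, mul_one,
          LinearMap.lTensor_tmul, hφ_apply]
        simp [map_mul, mul_comm, mul_assoc, mul_left_comm]
    | add s t hs ht => simp [add_mul, hs, ht]
  have key3 : ∀ (a : A) (b : B) (t : B ⊗[R] B),
      LinearMap.mul' R B (LinearMap.lTensor B (φ a) ((b ⊗ₜ[R] (1 : B)) * t))
        = b * LinearMap.mul' R B (LinearMap.lTensor B (φ a) t) := by
    intro a b t
    induction t using TensorProduct.induction_on with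
    | zero => simp
    | tmul x y =>
        simp only [Algebra.TensorProduct.tmul_mul_tmul, one_mul,
          LinearMap.lTensor_tmul, LinearMap.mul'_apply]
        ring
    | add s t hs ht => simp [mul_add, hs, ht]
  refine ⟨ft, ?_, ?_⟩
  · intro b a
    have h1 : (σ 1) * ((1 : B) ⊗ₜ[R] b) = (b ⊗ₜ[R] (1 : B)) * σ 1 := by
      have := hσ_right 1 b
      have h2 := hσ_left b 1
      rw [one_mul] at this
      rw [mul_one] at h2
      rw [← this, ← h2]
    show ftf (g b * a) = b * ftf a
    rw [hftf]
    simp only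
    rw [key2 a b (σ 1), h1, key3 a b (σ 1)]
  · intro a
    show g (ftf a) = a
    rw [hftf]
    simp only
    rw [key1 a (σ 1), hσ_sec 1, map_one, one_mul]
end

section
/- Let R be a commutative ring with connected spectrum (no nontrivial idempotents), and A, B commutative separable R-algebras that are finitely generated projective as R-modules. If h : A ≅ B × C is an R-algebra isomorphism for some R-algebra C, then any indecomposable ring factor of A is isomorphic as an R-algebra to a ring factor of B or of C. Consequently, a decomposition of A as a finite product of indecomposable R-algebras is unique up to isomorphism and permutation of factors. -/
section Aux
variable (R : Type) [CommRing R]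

/-- Pair congruence of algebra equivs. -/
def myProdCongr {A B A' B' : Type} [CommRing A] [Algebra R A] [CommRing B] [Algebra R B]
    [CommRing A'] [Algebra R A'] [CommRing B'] [Algebra R B']
    (f : A ≃ₐ[R] A') (g : B ≃ₐ[R] B') : (A × B) ≃ₐ[R] A' × B' where
  toFun p := (f p.1, g p.2)
  invFun p := (f.symm p.1, g.symm p.2)
  left_inv p := by simp
  right_inv p := by simp
  map_mul' p q := by simp [Prod.mul_def]
  map_add' p q := by simp [Prod.add_def]
  commutes' r := by simp [Prod.algebraMap_apply]

/-- Swap of factors. -/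
def myProdComm {A B : Type} [CommRing A] [Algebra R A] [CommRing B] [Algebra R B] :
    (A × B) ≃ₐ[R] B × A where
  toFun p := (p.2, p.1)
  invFun p := (p.2, p.1)
  left_inv p := rfl
  right_inv p := rfl
  map_mul' p q := rfl
  map_add' p q := rfl
  commutes' r := rfl

/-- Associator. -/
def myProdAssoc {A B C : Type} [CommRing A] [Algebra R A] [CommRing B] [Algebra R B]
    [CommRing C] [Algebra R C] : ((A × B) × C) ≃ₐ[R] A × (B × C) where
  toFun p := (p.1.1, (p.1.2, p.2))
  invFun p := ((p.1, p.2.1), p.2.2)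
  left_inv p := rfl
  right_inv p := rfl
  map_mul' p q := rfl
  map_add' p q := rfl
  commutes' r := rfl

/-- Splitting a Pi over `Fin (n+1)` at index `p`. -/
def myPiSplit {n : ℕ} (F : Fin (n + 1) → Type) [∀ i, CommRing (F i)] [∀ i, Algebra R (F i)]
    (p : Fin (n + 1)) : (∀ i, F i) ≃ₐ[R] F p × ∀ i, F (p.succAbove i) :=
  { (Fin.insertNthEquiv F p).symm with
    map_mul' := fun _ _ => rfl
    map_add' := fun _ _ => rfl
    commutes' := fun _ => rfl }

end Aux

section Aux2
variable {R : Type} [CommRing R]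

/-- If two product decompositions of `A` have the same idempotent for the first factor,
the first factors are isomorphic. -/
noncomputable def myFactorUnique {A D D' E E' : Type} [CommRing A] [Algebra R A]
    [CommRing D] [Algebra R D] [CommRing D'] [Algebra R D']
    [CommRing E] [Algebra R E] [CommRing E'] [Algebra R E']
    (ψ : A ≃ₐ[R] D × D') (φ : A ≃ₐ[R] E × E')
    (h : ψ.symm (1, 0) = φ.symm (1, 0)) : D ≃ₐ[R] E := by
  set χ : (D × D') ≃ₐ[R] E × E' := ψ.symm.trans φ with hχ
  have hone : χ (1, 0) = (1, 0) := by
    have : φ (φ.symm (1,0)) = (1,0) := φ.apply_symm_apply _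
    simpa [hχ, AlgEquiv.trans_apply, ← h] using this
  have honesymm : χ.symm (1, 0) = (1, 0) := by
    rw [← hone, AlgEquiv.symm_apply_apply]
  have key : ∀ (W W' Z Z' : Type) [CommRing W] [Algebra R W] [CommRing W'] [Algebra R W']
      [CommRing Z] [Algebra R Z] [CommRing Z'] [Algebra R Z']
      (θ : (W × W') ≃ₐ[R] Z × Z'), θ (1,0) = (1,0) → ∀ w : W, θ (w, 0) = ((θ (w,0)).1, 0) := by
    intro W W' Z Z' _ _ _ _ _ _ _ _ θ hθ w
    have : θ ((w, 0) * (1, 0)) = θ (w, 0) * (1, 0) := by rw [map_mul, hθ]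
    have h2 : (w, (0:W')) * (1, 0) = (w, 0) := by simp [Prod.mul_def]
    rw [h2] at this
    rw [this]
    simp [Prod.mul_def]
  exact
  { toFun := fun d => (χ (d, 0)).1
    invFun := fun e => (χ.symm (e, 0)).1
    left_inv := by
      intro d
      have := key D D' E E' χ hone d
      show (χ.symm ((χ (d, 0)).1, 0)).1 = d
      rw [← this, AlgEquiv.symm_apply_apply]
    right_inv := by
      intro e
      have := key E E' D D' χ.symm honesymm e
      show (χ ((χ.symm (e, 0)).1, 0)).1 = e
      rw [← this, AlgEquiv.apply_symm_apply]
    map_mul' := by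
      intro d d'
      show (χ (d * d', 0)).1 = (χ (d, 0)).1 * (χ (d', 0)).1
      have : ((d:D), (0:D')) * (d', 0) = (d * d', 0) := by simp [Prod.mul_def]
      rw [← this, map_mul]
      rfl
    map_add' := by
      intro d d'
      show (χ (d + d', 0)).1 = (χ (d, 0)).1 + (χ (d', 0)).1
      have : ((d:D), (0:D')) + (d', 0) = (d + d', 0) := by simp
      rw [← this, map_add]
      rfl
    commutes' := by
      intro r
      show (χ (algebraMap R D r, 0)).1 = algebraMap R E r
      have h1 : (algebraMap R D r, (0:D')) = algebraMap R (D × D') r * (1, 0) := by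
        simp [Prod.algebraMap_apply, Prod.mul_def]
      rw [h1, map_mul, AlgEquiv.commutes, hone]
      simp [Prod.algebraMap_apply, Prod.mul_def] }

end Aux2

section Aux3
variable {R : Type} [CommRing R] {A : Type} [CommRing A] [Algebra R A]

/-- Decomposition of `A` along an idempotent `e`, as a product of two quotients. -/
noncomputable def myCornerDecomp (e : A) (he : e * e = e) :
    A ≃ₐ[R] (A ⧸ Ideal.span {1 - e}) × (A ⧸ Ideal.span {e}) := by
  refine AlgEquiv.ofBijective
    ((Ideal.Quotient.mkₐ R (Ideal.span {1 - e})).prod (Ideal.Quotient.mkₐ R (Ideal.span {e})))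
    ⟨?_, ?_⟩
  · intro x y hxy
    have h1 : Ideal.Quotient.mk (Ideal.span {1 - e}) (x - y) = 0 := by
      rw [map_sub, sub_eq_zero]; exact congrArg Prod.fst hxy
    have h2 : Ideal.Quotient.mk (Ideal.span {e}) (x - y) = 0 := by
      rw [map_sub, sub_eq_zero]; exact congrArg Prod.snd hxy
    rw [Ideal.Quotient.eq_zero_iff_mem, Ideal.mem_span_singleton] at h1 h2
    obtain ⟨u, hu⟩ := h1
    obtain ⟨v, hv⟩ := h2
    have hee : e - e * e = 0 := by rw [he]; ring
    have ha : (x - y) * e = 0 := by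
      calc (x - y) * e = (1 - e) * u * e := by rw [hu]
      _ = u * (e - e * e) := by ring
      _ = 0 := by rw [hee, mul_zero]
    have hb : (x - y) * (1 - e) = 0 := by
      calc (x - y) * (1 - e) = e * v * (1 - e) := by rw [hv]
      _ = v * (e - e * e) := by ring
      _ = 0 := by rw [hee, mul_zero]
    have hz : x - y = 0 := by
      calc x - y = (x - y) * e + (x - y) * (1 - e) := by ring
      _ = 0 := by rw [ha, hb, add_zero]
    exact sub_eq_zero.mp hz
  · rintro ⟨x, y⟩
    obtain ⟨a, rfl⟩ := Ideal.Quotient.mk_surjective x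
    obtain ⟨b, rfl⟩ := Ideal.Quotient.mk_surjective y
    refine ⟨a * e + b * (1 - e), ?_⟩
    have h1 : Ideal.Quotient.mk (Ideal.span {1 - e}) (a * e + b * (1 - e)) =
        Ideal.Quotient.mk (Ideal.span {1 - e}) a := by
      rw [Ideal.Quotient.eq]
      refine Ideal.mem_span_singleton.mpr ⟨b - a, by ring⟩
    have h2 : Ideal.Quotient.mk (Ideal.span {e}) (a * e + b * (1 - e)) =
        Ideal.Quotient.mk (Ideal.span {e}) b := by
      rw [Ideal.Quotient.eq]
      refine Ideal.mem_span_singleton.mpr ⟨a - b, by ring⟩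
    exact Prod.ext h1 h2

theorem myCornerDecomp_apply_e (e : A) (he : e * e = e) :
    (myCornerDecomp (R := R) e he) e = (1, 0) := by
  have h1 : Ideal.Quotient.mk (Ideal.span {1 - e}) e = 1 := by
    have h0 : (1 : A ⧸ Ideal.span {1 - e}) = Ideal.Quotient.mk (Ideal.span {1 - e}) 1 := rfl
    rw [h0, Ideal.Quotient.eq]
    have : e - 1 = -(1 - e) := by ring
    rw [this]
    exact neg_mem (Ideal.mem_span_singleton_self _)
  have h2 : Ideal.Quotient.mk (Ideal.span {e}) e = 0 :=
    Ideal.Quotient.eq_zero_iff_mem.mpr (Ideal.mem_span_singleton_self _)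
  have happ : (myCornerDecomp (R := R) e he) e =
      (Ideal.Quotient.mk (Ideal.span {1 - e}) e, Ideal.Quotient.mk (Ideal.span {e}) e) := rfl
  rw [happ, h1, h2]

end Aux3

section Aux4
variable {R : Type} [CommRing R]

/-- If the idempotent of the `D`-factor is absorbed by the idempotent of the `B`-factor,
then `D` is a ring factor of `B`. -/
theorem myFactorAbsorb {A D D' B C : Type} [CommRing A] [Algebra R A]
    [CommRing D] [Algebra R D] [CommRing D'] [Algebra R D']
    [CommRing B] [Algebra R B] [CommRing C] [Algebra R C]
    (ψ : A ≃ₐ[R] D × D') (φ : A ≃ₐ[R] B × C)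
    (hef : ψ.symm (1, 0) * φ.symm (1, 0) = ψ.symm (1, 0)) :
    ∃ (E : Type) (_ : CommRing E) (_ : Algebra R E), Nonempty (B ≃ₐ[R] D × E) := by
  set e : A := ψ.symm (1, 0) with hedef
  have he : e * e = e := by
    rw [hedef, ← map_mul, show ((1,0) : D × D') * (1,0) = (1,0) by simp [Prod.mul_def]]
  -- φ e = (b, 0)
  have hφe : φ e = ((φ e).1, 0) := by
    have : φ e = φ e * (1, 0) := by
      conv_lhs => rw [← hef]
      rw [map_mul, AlgEquiv.apply_symm_apply]
    rw [this]
    simp [Prod.mul_def]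
  set b : B := (φ e).1 with hbdef
  have hb : b * b = b := by
    have := map_mul φ e e
    rw [he] at this
    have h1 := congrArg Prod.fst this
    simpa [Prod.mul_def] using h1.symm
  -- decompose B along b
  let β : B ≃ₐ[R] (B ⧸ Ideal.span {1 - b}) × (B ⧸ Ideal.span {b}) := myCornerDecomp b hb
  -- φ₂ : A ≃ Q_b × (Q_{1-b} × C)
  let φ₂ : A ≃ₐ[R] (B ⧸ Ideal.span {1 - b}) × ((B ⧸ Ideal.span {b}) × C) :=
    (φ.trans (myProdCongr R β (AlgEquiv.refl))).trans (myProdAssoc R)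
  have hφ₂e : φ₂ e = (1, 0) := by
    show (myProdAssoc R) ((myProdCongr R β AlgEquiv.refl) (φ e)) = (1, (0, 0))
    rw [hφe]
    show (myProdAssoc R) ((β b, (0 : C))) = (1, (0, 0))
    rw [myCornerDecomp_apply_e b hb]
    rfl
  have hsymm : ψ.symm (1, 0) = φ₂.symm (1, 0) := by
    rw [← hφ₂e, AlgEquiv.symm_apply_apply, hedef]
  let iso : D ≃ₐ[R] B ⧸ Ideal.span {1 - b} := myFactorUnique ψ φ₂ hsymm
  exact ⟨B ⧸ Ideal.span {b}, inferInstance, inferInstance,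
    ⟨β.trans (myProdCongr R iso.symm AlgEquiv.refl)⟩⟩

end Aux4

section Aux5
variable {R : Type} [CommRing R]

theorem myPart1 {A B C D D' : Type} [CommRing A] [Algebra R A]
    [CommRing B] [Algebra R B] [CommRing C] [Algebra R C]
    [CommRing D] [Algebra R D] [CommRing D'] [Algebra R D']
    (h : A ≃ₐ[R] B × C) (ψ : A ≃ₐ[R] D × D')
    (hD : ∀ e : D, e * e = e → e = 0 ∨ e = 1) :
    (∃ (E : Type) (_ : CommRing E) (_ : Algebra R E), Nonempty (B ≃ₐ[R] D × E)) ∨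
    (∃ (E : Type) (_ : CommRing E) (_ : Algebra R E), Nonempty (C ≃ₐ[R] D × E)) := by
  set e : A := ψ.symm (1, 0) with hedef
  set f : A := h.symm (1, 0) with hfdef
  have hψe : ψ e = (1, 0) := ψ.apply_symm_apply _
  have hf : f * f = f := by
    rw [hfdef, ← map_mul, show ((1,0) : B × C) * (1,0) = (1,0) by simp [Prod.mul_def]]
  set d : D := (ψ f).1 with hddef
  have hd : d * d = d := by
    have := map_mul ψ f f
    rw [hf] at this
    have h1 := congrArg Prod.fst this
    simpa [Prod.mul_def] using h1.symm
  have hψef : ψ (e * f) = (d, 0) := by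
    rw [map_mul, hψe]
    simp [Prod.mul_def, hddef]
  rcases hD d hd with hd0 | hd1
  · -- e * f = 0, so e is absorbed by the C side
    right
    have hef0 : e * f = 0 := by
      apply ψ.injective
      rw [hψef, hd0, map_zero]
      rfl
    have h1f : h.symm (0, 1) = 1 - f := by
      have h01 : ((0,1) : B × C) = (1,1) - (1,0) := by
        rw [Prod.mk_sub_mk]; norm_num
      rw [h01, map_sub, hfdef]
      congr 1
      exact map_one h.symm
    refine myFactorAbsorb ψ (h.trans (myProdComm R)) ?_
    have hsy : (h.trans (myProdComm R)).symm (1, 0) = h.symm (0, 1) := rfl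
    rw [hsy, h1f, ← hedef, mul_sub, mul_one, hef0, sub_zero]
  · -- e * f = e, absorbed by the B side
    left
    refine myFactorAbsorb ψ h ?_
    apply ψ.injective
    rw [hψef, hd1, hψe]

end Aux5

section Aux6
variable {R : Type} [CommRing R]

theorem mySymmZeroOne {A X Y : Type} [CommRing A] [Algebra R A]
    [CommRing X] [Algebra R X] [CommRing Y] [Algebra R Y] (θ : A ≃ₐ[R] X × Y) :
    θ.symm (0, 1) = 1 - θ.symm (1, 0) := by
  have h01 : ((0,1) : X × Y) = (1,1) - (1,0) := by rw [Prod.mk_sub_mk]; norm_num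
  rw [h01, map_sub]
  congr 1
  exact map_one θ.symm

theorem myKeyPi {A D D' : Type} [CommRing A] [Algebra R A]
    [CommRing D] [Algebra R D] [CommRing D'] [Algebra R D'] {m' : ℕ}
    (E : Fin (m' + 1) → Type) [∀ j, CommRing (E j)] [∀ j, Algebra R (E j)]
    [Nontrivial D] (hE : ∀ j, ∀ x : E j, x * x = x → x = 0 ∨ x = 1)
    (hD : ∀ x : D, x * x = x → x = 0 ∨ x = 1)
    (ψ : A ≃ₐ[R] D × D') (φ : A ≃ₐ[R] ∀ j, E j) :
    ∃ j, Nonempty (D ≃ₐ[R] E j) ∧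
      Nonempty (D' ≃ₐ[R] ∀ k : Fin m', E (j.succAbove k)) := by
  set e : A := ψ.symm (1, 0) with hedef
  have hψe : ψ e = (1, 0) := ψ.apply_symm_apply _
  have he : e * e = e := by
    rw [hedef, ← map_mul, show ((1,0) : D × D') * (1,0) = (1,0) by simp [Prod.mul_def]]
  set f : Fin (m' + 1) → A := fun k => φ.symm (Pi.single k 1) with hfdef
  have hsingle_mul : ∀ k, (Pi.single k (1 : E k) : ∀ j, E j) * Pi.single k 1 = Pi.single k 1 := by
    intro k
    rw [← Pi.single_mul, one_mul]
  have hfidem : ∀ k, f k * f k = f k := by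
    intro k
    rw [hfdef, ← map_mul, hsingle_mul]
  have hsum : ∑ k, f k = 1 := by
    rw [hfdef, ← map_sum]
    have : ∑ k, (Pi.single k (1 : E k) : ∀ j, E j) = 1 := by
      ext j
      rw [Finset.sum_apply]
      simp [Pi.single_apply]
    rw [this, map_one]
  set d : Fin (m' + 1) → D := fun k => (ψ (f k)).1 with hddef
  have hψef : ∀ k, ψ (e * f k) = (d k, 0) := by
    intro k
    rw [map_mul, hψe]
    simp [Prod.mul_def, hddef]
  have hdidem : ∀ k, d k * d k = d k := by
    intro k
    have h1 : (e * f k) * (e * f k) = e * f k := by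
      calc (e * f k) * (e * f k) = (e * e) * (f k * f k) := by ring
      _ = e * f k := by rw [he, hfidem]
    have := map_mul ψ (e * f k) (e * f k)
    rw [h1, hψef k] at this
    have h2 := congrArg Prod.fst this
    simpa [Prod.mul_def] using h2.symm
  have hdsum : ∑ k, d k = 1 := by
    have h1 : ∑ k, e * f k = e := by rw [← Finset.mul_sum, hsum, mul_one]
    have h2 := congrArg Prod.fst (congrArg ψ h1)
    rw [map_sum] at h2
    rw [hψe] at h2
    have h3 : (∑ k, ψ (e * f k)).1 = ∑ k, d k := by
      rw [Prod.fst_sum]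
      exact Finset.sum_congr rfl fun k _ => by rw [hψef k]
    rw [h3] at h2
    exact h2
  -- find j with d j = 1
  have hexj : ∃ j, d j = 1 := by
    by_contra hno
    push_neg at hno
    have hall0 : ∀ k, d k = 0 := fun k => (hD (d k) (hdidem k)).resolve_right (hno k)
    rw [Finset.sum_congr rfl (fun k _ => hall0 k), Finset.sum_const_zero] at hdsum
    exact zero_ne_one hdsum
  obtain ⟨j, hj⟩ := hexj
  have hefj : e * f j = e := by
    apply ψ.injective
    rw [hψef j, hj, hψe]
  -- φ e = Pi.single j 1
  have hφef : φ e = φ e * Pi.single j 1 := by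
    conv_lhs => rw [← hefj]
    rw [map_mul, hfdef]
    congr 1
    exact φ.apply_symm_apply _
  have hφek : ∀ k, k ≠ j → (φ e) k = 0 := by
    intro k hk
    have := congrFun hφef k
    rw [Pi.mul_apply, Pi.single_eq_of_ne hk, mul_zero] at this
    exact this
  have hεidem : (φ e) j * (φ e) j = (φ e) j := by
    have := map_mul φ e e
    rw [he] at this
    exact (congrFun this j).symm
  have hε1 : (φ e) j = 1 := by
    rcases hE j _ hεidem with h0 | h1
    · exfalso
      have hφe0 : φ e = 0 := by
        ext k
        by_cases hk : k = j
        · subst hk; exact h0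
        · exact hφek k hk
      have he0 : e = 0 := by
        apply φ.injective
        rw [hφe0, map_zero]
      have := hψe
      rw [he0, map_zero] at this
      exact one_ne_zero (congrArg Prod.fst this).symm
    · exact h1
  have hφe : φ e = Pi.single j 1 := by
    ext k
    by_cases hk : k = j
    · subst hk; rw [hε1, Pi.single_eq_same]
    · rw [hφek k hk, Pi.single_eq_of_ne hk]
  -- split the Pi at j
  let s : (∀ j, E j) ≃ₐ[R] E j × ∀ k : Fin m', E (j.succAbove k) := myPiSplit R E j
  have hssingle : s (Pi.single j 1) = (1, 0) := by
    show ((Pi.single j (1:E j) : ∀ i, E i) j, fun k => (Pi.single j (1:E j) : ∀ i, E i) (j.succAbove k)) = (1, 0)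
    refine Prod.ext ?_ ?_
    · exact Pi.single_eq_same j 1
    · funext k
      exact Pi.single_eq_of_ne (Fin.succAbove_ne j k) 1
  let φ' : A ≃ₐ[R] E j × ∀ k : Fin m', E (j.succAbove k) := φ.trans s
  have hφ'e : φ' e = (1, 0) := by
    show s (φ e) = (1, 0)
    rw [hφe, hssingle]
  have hsymm1 : ψ.symm (1, 0) = φ'.symm (1, 0) := by
    rw [← hφ'e, AlgEquiv.symm_apply_apply, hedef]
  have iso1 : D ≃ₐ[R] E j := myFactorUnique ψ φ' hsymm1
  have hsymm2 : (ψ.trans (myProdComm R)).symm (1, 0) = (φ'.trans (myProdComm R)).symm (1, 0) := by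
    have h1 : (ψ.trans (myProdComm R)).symm (1, 0) = ψ.symm (0, 1) := rfl
    have h2 : (φ'.trans (myProdComm R)).symm (1, 0) = φ'.symm (0, 1) := rfl
    rw [h1, h2, mySymmZeroOne ψ, mySymmZeroOne φ', hsymm1]
  have iso2 : D' ≃ₐ[R] ∀ k : Fin m', E (j.succAbove k) :=
    myFactorUnique (ψ.trans (myProdComm R)) (φ'.trans (myProdComm R)) hsymm2
  exact ⟨j, ⟨iso1⟩, ⟨iso2⟩⟩

end Aux6

section Aux7
variable {R : Type} [CommRing R]

theorem myUniq : ∀ (n : ℕ) (A : Type) (_ : CommRing A) (_ : Algebra R A) (m : ℕ)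
    (D : Fin n → Type) (_ : ∀ i, CommRing (D i)) (_ : ∀ i, Algebra R (D i))
    (E : Fin m → Type) (_ : ∀ j, CommRing (E j)) (_ : ∀ j, Algebra R (E j)),
    (∀ i, Nontrivial (D i)) → (∀ i, ∀ x : D i, x * x = x → x = 0 ∨ x = 1) →
    (∀ j, Nontrivial (E j)) → (∀ j, ∀ x : E j, x * x = x → x = 0 ∨ x = 1) →
    (A ≃ₐ[R] ∀ i, D i) → (A ≃ₐ[R] ∀ j, E j) →
    ∃ σ : Fin n ≃ Fin m, ∀ i, Nonempty (D i ≃ₐ[R] E (σ i)) := by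
  intro n
  induction n with
  | zero =>
    intro A _ _ m D _ _ E _ _ hDnt _ hEnt _ eD eE
    have hsubA : Subsingleton A := by
      have : Subsingleton (∀ i, D i) := inferInstance
      exact eD.toEquiv.subsingleton
    have hsubE : Subsingleton (∀ j, E j) := eE.symm.toEquiv.subsingleton
    match m with
    | 0 => exact ⟨Equiv.refl _, fun i => i.elim0⟩
    | m' + 1 =>
      exfalso
      have h10 : (1 : ∀ j, E j) = 0 := Subsingleton.elim _ _
      have := congrFun h10 0
      exact one_ne_zero this
  | succ n ih =>
    intro A _ _ m D _ _ E _ _ hDnt hDi hEnt hEi eD eE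
    match m with
    | 0 =>
      exfalso
      have hsubE : Subsingleton (∀ j, E j) := inferInstance
      have hsubA : Subsingleton A := eE.toEquiv.subsingleton
      have hsubD : Subsingleton (∀ i, D i) := eD.symm.toEquiv.subsingleton
      have h10 : (1 : ∀ i, D i) = 0 := Subsingleton.elim _ _
      have := congrFun h10 0
      exact one_ne_zero this
    | m' + 1 =>
      -- split off D 0
      have hnt0 : Nontrivial (D 0) := hDnt 0
      obtain ⟨j, ⟨iso1⟩, ⟨iso2⟩⟩ :=
        myKeyPi (D' := ∀ i : Fin n, D ((0 : Fin (n+1)).succAbove i)) E hEi (hDi 0)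
          (eD.trans (myPiSplit R D 0)) eE
      -- apply IH to the complements
      obtain ⟨τ, hτ⟩ := ih (∀ i : Fin n, D ((0 : Fin (n+1)).succAbove i)) _ _ m'
        (fun i => D ((0 : Fin (n+1)).succAbove i)) _ _
        (fun k => E (j.succAbove k)) _ _
        (fun i => hDnt _) (fun i => hDi _) (fun k => hEnt _) (fun k => hEi _)
        AlgEquiv.refl iso2
      refine ⟨(finSuccEquiv' (0 : Fin (n+1))).trans
        ((Equiv.optionCongr τ).trans (finSuccEquiv' j).symm), ?_⟩
      intro i
      induction i using Fin.cases with
      | zero =>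
        have hσ0 : ((finSuccEquiv' (0 : Fin (n+1))).trans
            ((Equiv.optionCongr τ).trans (finSuccEquiv' j).symm)) 0 = j := by
          simp [finSuccEquiv'_at, finSuccEquiv'_symm_none]
        rw [hσ0]
        exact ⟨iso1⟩
      | succ i' =>
        have hsa : (i' : Fin n).succ = (0 : Fin (n+1)).succAbove i' := by
          rw [Fin.succAbove_zero]
        have h1 : finSuccEquiv' (0 : Fin (n+1)) ((0 : Fin (n+1)).succAbove i') = some i' :=
          finSuccEquiv'_succAbove 0 i'
        have hσ : ((finSuccEquiv' (0 : Fin (n+1))).trans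
            ((Equiv.optionCongr τ).trans (finSuccEquiv' j).symm)) ((0 : Fin (n+1)).succAbove i')
            = j.succAbove (τ i') := by
          rw [Equiv.trans_apply, h1, Equiv.trans_apply]
          simp [finSuccEquiv'_symm_some]
        rw [hsa, hσ]
        exact hτ i'

end Aux7



open TensorProduct

/-- An `R`-algebra `A` is separable if the multiplication `A ⊗_R A → A` admits an
`A`-bimodule-linear section. -/
def HasSepSection (R A : Type) [CommRing R] [CommRing A] [Algebra R A] : Prop :=
  ∃ σ : A →ₗ[R] A ⊗[R] A,
    (∀ a : A, LinearMap.mul' R A (σ a) = a) ∧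
    (∀ a x : A, σ (a * x) = (a ⊗ₜ[R] (1 : A)) * σ x) ∧
    (∀ x a : A, σ (x * a) = σ x * ((1 : A) ⊗ₜ[R] a))

/-- Over a commutative ring `R` with no nontrivial idempotents, if `A` is
a commutative separable `R`-algebra, finitely generated projective as an `R`-module,
and `A ≅ B × C` as `R`-algebras, then every indecomposable ring factor of `A` is a ring
factor of `B` or of `C`; consequently a decomposition of `A` into a finite product of
indecomposable `R`-algebras is unique up to isomorphism and permutation. -/
theorem stmt_15 (R A B C : Type) [CommRing R] [CommRing A] [Algebra R A]
    [CommRing B] [Algebra R B] [CommRing C] [Algebra R C]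
    (hR : ∀ e : R, e * e = e → e = 0 ∨ e = 1)
    (hsepA : HasSepSection R A) [Module.Finite R A] [Module.Projective R A]
    (hsepB : HasSepSection R B) [Module.Finite R B] [Module.Projective R B]
    (h : Nonempty (A ≃ₐ[R] B × C)) :
    (∀ (D D' : Type) [CommRing D] [Algebra R D] [CommRing D'] [Algebra R D'],
      Nonempty (A ≃ₐ[R] D × D') → Nontrivial D → (∀ e : D, e * e = e → e = 0 ∨ e = 1) →
      (∃ (E : Type) (_ : CommRing E) (_ : Algebra R E), Nonempty (B ≃ₐ[R] D × E)) ∨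
      (∃ (E : Type) (_ : CommRing E) (_ : Algebra R E), Nonempty (C ≃ₐ[R] D × E))) ∧
    (∀ (n m : ℕ) (D : Fin n → Type) [∀ i, CommRing (D i)] [∀ i, Algebra R (D i)]
        (E : Fin m → Type) [∀ j, CommRing (E j)] [∀ j, Algebra R (E j)],
      (∀ i, Nontrivial (D i)) → (∀ i, ∀ e : D i, e * e = e → e = 0 ∨ e = 1) →
      (∀ j, Nontrivial (E j)) → (∀ j, ∀ e : E j, e * e = e → e = 0 ∨ e = 1) →
      Nonempty (A ≃ₐ[R] ∀ i, D i) → Nonempty (A ≃ₐ[R] ∀ j, E j) →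
      ∃ σ : Fin n ≃ Fin m, ∀ i, Nonempty (D i ≃ₐ[R] E (σ i))) := by
  obtain ⟨hBC⟩ := h
  constructor
  · intro D D' _ _ _ _ hψ _ hDi
    obtain ⟨ψ⟩ := hψ
    exact myPart1 hBC ψ hDi
  · intro n m D _ _ E _ _ hDnt hDi hEnt hEi heD heE
    obtain ⟨eD⟩ := heD
    obtain ⟨eE⟩ := heE
    exact myUniq n A _ _ m D _ _ E _ _ hDnt hDi hEnt hEi eD eE
end
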